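/- arXiv:2102.07222 — 4 statements merged into one kernel-verified Lean document; each statement's English description precedes it below -/
import Mathlib

section
/- For natural numbers η and k with 0 ≤ k ≤ η, the inequality P[Bi(η+2, 1/2) ≥ k+1] > P[Bi(η, 1/2) ≥ k] holds if and only if k > η/2 + 1/2. -/
/-- P[Bi(n,p) = k] -/
noncomputable def binomPMF (n k : ℕ) (p : ℝ) : ℝ :=
  (n.choose k : ℝ) * p ^ k * (1 - p) ^ (n - k)

/-- P[Bi(n,p) ≥ k] -/
noncomputable def binomGE (n k : ℕ) (p : ℝ) : ℝ :=
  ∑ m ∈ Finset.Icc k n, binomPMF n m p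

/-!
With `T n k = ∑_{m ≥ k} C(n, m)` (`chooseTail n k`) one has `P[Bi(n, 1/2) ≥ k] = T n k / 2 ^ n`,
so the claim is `4 T η k < T (η + 2) (k + 1)`. Applying Pascal's rule twice and peeling off single
terms gives `T (η + 2) (k + 1) = 4 T η k + C(η, k - 1) - C(η, k)` for `k ≥ 1`, so the comparison is
decided by whether `C(η, k - 1) > C(η, k)`, i.e. by whether `k` lies beyond the middle
`(η + 1) / 2`. For `k = 0` it fails since `P[Bi(η + 2, 1/2) ≥ 1] < 1`.
-/

open Finset

def chooseTail (n k : ℕ) : ℕ := ∑ m ∈ Icc k n, n.choose m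

lemma chooseTail_zero_right (n : ℕ) : chooseTail n 0 = 2 ^ n := by
  rw [chooseTail, ← Nat.sum_range_choose, Nat.range_succ_eq_Icc_zero]

lemma chooseTail_eq_choose_add (n k : ℕ) :
    chooseTail n k = n.choose k + chooseTail n (k + 1) := by
  rcases le_or_gt k n with h | h
  · rw [chooseTail, Icc_eq_cons_Ioc h, sum_cons, chooseTail, Icc_add_one_left_eq_Ioc]
  · simp [chooseTail, Nat.choose_eq_zero_of_lt h, Icc_eq_empty_of_lt h,
      Icc_eq_empty_of_lt (h.trans (Nat.lt_succ_self k))]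

lemma sum_Icc_choose_eq_chooseTail {n N : ℕ} (k : ℕ) (h : n ≤ N) :
    ∑ m ∈ Icc k N, n.choose m = chooseTail n k :=
  (sum_subset (Icc_subset_Icc_right h) fun _ hm hmn =>
    Nat.choose_eq_zero_of_lt (by simp_all)).symm

lemma chooseTail_succ_succ (n k : ℕ) :
    chooseTail (n + 1) (k + 1) = chooseTail n k + chooseTail n (k + 1) := by
  rw [chooseTail, ← map_add_right_Icc, sum_map]
  simp only [addRightEmbedding_apply, Nat.choose_succ_succ', sum_add_distrib]
  rw [← sum_Icc_choose_eq_chooseTail (k + 1) n.le_succ, ← map_add_right_Icc, sum_map]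
  rfl

lemma chooseTail_add_two_add_choose (n k : ℕ) :
    chooseTail (n + 2) (k + 2) + n.choose (k + 1) = 4 * chooseTail n (k + 1) + n.choose k := by
  have h₁ : chooseTail (n + 2) (k + 2) = chooseTail (n + 1) (k + 1) + chooseTail (n + 1) (k + 2) :=
    chooseTail_succ_succ (n + 1) (k + 1)
  have h₂ := chooseTail_succ_succ n k
  have h₃ : chooseTail (n + 1) (k + 2) = chooseTail n (k + 1) + chooseTail n (k + 2) :=
    chooseTail_succ_succ n (k + 1)
  have h₄ := chooseTail_eq_choose_add n k
  have h₅ : chooseTail n (k + 1) = n.choose (k + 1) + chooseTail n (k + 2) :=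
    chooseTail_eq_choose_add n (k + 1)
  omega

lemma choose_succ_lt_choose_iff {n k : ℕ} (h : k ≤ n) :
    n.choose (k + 1) < n.choose k ↔ n < 2 * k + 1 := by
  have hpos : 0 < n.choose k := Nat.choose_pos h
  calc n.choose (k + 1) < n.choose k
      ↔ n.choose (k + 1) * (k + 1) < n.choose k * (k + 1) := (Nat.mul_lt_mul_right k.succ_pos).symm
    _ ↔ n.choose k * (n - k) < n.choose k * (k + 1) := by rw [Nat.choose_succ_right_eq]
    _ ↔ n - k < k + 1 := Nat.mul_lt_mul_left hpos
    _ ↔ n < 2 * k + 1 := by omega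

lemma binomGE_half (n k : ℕ) : binomGE n k (1 / 2) = chooseTail n k / 2 ^ n := by
  rw [binomGE, chooseTail, Nat.cast_sum, sum_div]
  refine sum_congr rfl fun m hm => ?_
  rw [binomPMF, mul_assoc, show (1 : ℝ) - 1 / 2 = 1 / 2 by norm_num, ← pow_add,
    Nat.add_sub_cancel' (mem_Icc.mp hm).2, div_pow, one_pow, mul_one_div]

theorem binom_half_tail_comparison (η k : ℕ) (hk : k ≤ η) :
    binomGE (η + 2) (k + 1) (1 / 2) > binomGE η k (1 / 2) ↔
      (k : ℝ) > (η : ℝ) / 2 + 1 / 2 := by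
  have hprob : binomGE (η + 2) (k + 1) (1 / 2) > binomGE η k (1 / 2) ↔
      4 * chooseTail η k < chooseTail (η + 2) (k + 1) := by
    rw [binomGE_half, binomGE_half, gt_iff_lt, pow_add, mul_comm, ← div_div,
      div_lt_div_iff_of_pos_right (by positivity), lt_div_iff₀ (by positivity)]
    norm_cast
    rw [mul_comm]
    norm_num
  have hmid : (k : ℝ) > (η : ℝ) / 2 + 1 / 2 ↔ η + 1 < 2 * k := by
    rw [gt_iff_lt, ← Nat.cast_lt (α := ℝ)]
    push_cast
    constructor <;> intro h <;> linarith
  rw [hprob, hmid]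
  rcases k with _ | j
  · have h := chooseTail_eq_choose_add (η + 2) 0
    rw [chooseTail_zero_right, Nat.choose_zero_right, pow_add] at h
    rw [chooseTail_zero_right]
    omega
  · have key : chooseTail (η + 2) (j + 1 + 1) + η.choose (j + 1) =
        4 * chooseTail η (j + 1) + η.choose j := chooseTail_add_two_add_choose η j
    have hchoose := choose_succ_lt_choose_iff (Nat.le_of_succ_le hk)
    omega
end

section
/- Suppose j is a positive odd integer and d = p ≥ 1. Then for every integer x with (j+3)/2 ≤ x ≤ j, P[Bi(j + 2d, 1/2) ≥ x + d] > P[Bi(j, 1/2) ≥ x]. -/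
open Finset

lemma sum_Icc_shift (f : ℕ → ℕ) (a b : ℕ) :
    ∑ m ∈ Icc (a+1) (b+1), f m = ∑ m ∈ Icc a b, f (m+1) := by
  rw [← Finset.Ico_add_one_right_eq_Icc, ← Finset.Ico_add_one_right_eq_Icc, Finset.sum_Ico_eq_sum_range,
    Finset.sum_Ico_eq_sum_range]
  apply Finset.sum_congr
  · congr 1; omega
  · intro i _; congr 1; omega

lemma T_succ (n a : ℕ) (ha : a ≤ n) :
    ∑ m ∈ Icc (a+1) (n+1), (n+1).choose m
      = (∑ m ∈ Icc (a+1) n, n.choose m) + ∑ m ∈ Icc a n, n.choose m := by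
  rw [sum_Icc_shift]
  rw [Finset.sum_congr rfl (fun m _ => Nat.choose_succ_succ n m), Finset.sum_add_distrib]
  rw [← sum_Icc_shift (fun m => n.choose m) a n]
  rw [Finset.sum_Icc_succ_top (by omega : a+1 ≤ n+1)]
  simp [Nat.choose_succ_self, add_comm]

lemma key (n k : ℕ) (h1 : n + 3 ≤ 2*k) (h2 : k ≤ n) :
    4 * (∑ m ∈ Icc k n, n.choose m) < ∑ m ∈ Icc (k+1) (n+2), (n+2).choose m := by
  obtain ⟨b, rfl⟩ : ∃ b, k = b + 1 := ⟨k - 1, by omega⟩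
  have e1 := T_succ (n+1) (b+1) (by omega)
  have e2 := T_succ n (b+1) (by omega)
  have e3 := T_succ n b (by omega)
  have s1 : ∑ m ∈ Icc (b+1) n, n.choose m
      = n.choose (b+1) + ∑ m ∈ Icc (b+2) n, n.choose m := by
    rw [Finset.Icc_eq_cons_Ioc (by omega : b+1 ≤ n), Finset.sum_cons]
    congr 1
    rw [← Finset.Icc_add_one_left_eq_Ioc]; rfl
  have s2 : ∑ m ∈ Icc b n, n.choose m
      = n.choose b + ∑ m ∈ Icc (b+1) n, n.choose m := by
    rw [Finset.Icc_eq_cons_Ioc (by omega : b ≤ n), Finset.sum_cons]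
    congr 1
    rw [← Finset.Icc_add_one_left_eq_Ioc]
  have hcic : n.choose (b+1) < n.choose b := by
    have hid := Nat.choose_succ_right_eq n b
    have hpos : 0 < n.choose b := Nat.choose_pos (by omega)
    have hlt : n - b < b + 1 := by omega
    nlinarith [hid, hpos, hlt]
  simp only [(by omega : b+1+1 = b+2), (by omega : n+1+1 = n+2)] at e1 e2 e3 s1 s2 ⊢
  omega

lemma binomGE_half_s7 (n a : ℕ) :
    binomGE n a (1/2) = (∑ m ∈ Icc a n, (n.choose m : ℕ) : ℝ) / 2^n := by
  unfold binomGE binomPMF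
  rw [Finset.sum_div]
  apply Finset.sum_congr rfl
  intro m hm
  have hmn : m ≤ n := (Finset.mem_Icc.mp hm).2
  have h2 : (1:ℝ) - 1/2 = 1/2 := by norm_num
  rw [h2, mul_assoc, ← pow_add, Nat.add_sub_cancel' hmn]
  rw [div_pow, one_pow]
  ring

lemma step_lemma (n k : ℕ) (h1 : n+3 ≤ 2*k) (h2 : k ≤ n) :
    binomGE (n+2) (k+1) (1/2) > binomGE n k (1/2) := by
  rw [binomGE_half_s7, binomGE_half_s7, gt_iff_lt,
    div_lt_div_iff₀ (by positivity) (by positivity)]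
  have hkey := key n k h1 h2
  have h4 : (2:ℝ)^(n+2) = 2^n * 4 := by ring
  have hr : ((4 * ∑ m ∈ Icc k n, n.choose m : ℕ) : ℝ)
      < ((∑ m ∈ Icc (k+1) (n+2), (n+2).choose m : ℕ) : ℝ) := by
    exact_mod_cast hkey
  push_cast at hr
  rw [h4]
  nlinarith [hr, pow_pos (by norm_num : (0:ℝ) < 2) n]

theorem struck_beats_random_odd (j d x : ℕ) (hj : 0 < j) (hjo : Odd j)
    (hd : 1 ≤ d) (hx1 : (j + 3) / 2 ≤ x) (hx2 : x ≤ j) :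
    binomGE (j + 2 * d) (x + d) (1 / 2) > binomGE j x (1 / 2) := by
  obtain ⟨t, ht⟩ := hjo
  have hkey : j + 3 ≤ 2 * x := by omega
  induction d, hd using Nat.le_induction with
  | base =>
      have h := step_lemma j x hkey hx2
      have e : j + 2 * 1 = j + 2 := by ring
      rw [e]; exact h
  | succ d hd1 ih =>
      have h := step_lemma (j + 2*d) (x + d) (by omega) (by omega)
      have e1 : j + 2 * (d+1) = (j + 2*d) + 2 := by ring
      have e2 : x + (d+1) = (x + d) + 1 := by ring
      rw [e1, e2]
      exact lt_trans ih h
end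

section
/- Let F be a continuous cumulative distribution function on [0,1] with F(c) > 0 for all c > 0 and lim_{c→0⁺} F(c) = 0. Fix n ≥ 2 and 1 ≤ x ≤ n−1. Let T_STR(c) and T_SAR(c) be functions satisfying T_STR(c) ≤ P[Bi(n, F(c)) > x] and T_SAR(c) ≥ σ(c)·P[Bi(n, F(c)) = x] for all c in some interval (0, t), where σ: (0,t) → (0,1] is weakly decreasing. Then there exists c̄ ∈ (0,t) such that T_STR(c) < T_SAR(c) for all c ∈ (0, c̄). -/
/-!
Write `p = F c`. As `p → 0⁺`, every term of `P[Bi(n, p) > x]` carries a factor `p ^ (x + 1)`,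
whereas `P[Bi(n, p) = x] ≥ p ^ x / 2 ^ n` once `p ≤ 1/2`; so the tail is eventually below any
fixed positive multiple of the point mass. Since `σ` is antitone, `σ c ≥ σ (t / 2) > 0` for
`c ≤ t / 2`, and the multiple `σ (t / 2)` suffices.
-/

open Filter Set

/-- P[Bi(n,p) > k] -/
noncomputable def binomGT (n k : ℕ) (p : ℝ) : ℝ :=
  ∑ m ∈ Finset.Icc (k + 1) n, binomPMF n m p

open scoped Topology

lemma binomPMF_nonneg (n k : ℕ) {p : ℝ} (hp0 : 0 ≤ p) (hp1 : p ≤ 1) : 0 ≤ binomPMF n k p := by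
  unfold binomPMF
  have : 0 ≤ 1 - p := by linarith
  positivity

lemma binomGT_le_two_pow_mul_pow (n k : ℕ) {p : ℝ} (hp0 : 0 ≤ p) (hp1 : p ≤ 1) :
    binomGT n k p ≤ 2 ^ n * p ^ (k + 1) := by
  have hterm : ∀ m ∈ Finset.Icc (k + 1) n, binomPMF n m p ≤ (n.choose m : ℝ) * p ^ (k + 1) := by
    intro m hm
    have hpow : p ^ m ≤ p ^ (k + 1) := pow_le_pow_of_le_one hp0 hp1 (Finset.mem_Icc.1 hm).1
    have hcompl : (1 - p) ^ (n - m) ≤ 1 := pow_le_one₀ (by linarith) (by linarith)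
    unfold binomPMF
    calc (n.choose m : ℝ) * p ^ m * (1 - p) ^ (n - m) ≤ (n.choose m : ℝ) * p ^ (k + 1) * 1 := by
          gcongr
      _ = _ := mul_one _
  have hchoose : ∑ m ∈ Finset.Icc (k + 1) n, (n.choose m : ℝ) ≤ 2 ^ n := by
    calc ∑ m ∈ Finset.Icc (k + 1) n, (n.choose m : ℝ)
        ≤ ∑ m ∈ Finset.range (n + 1), (n.choose m : ℝ) :=
          Finset.sum_le_sum_of_subset_of_nonneg
            (fun m hm => Finset.mem_range_succ_iff.2 (Finset.mem_Icc.1 hm).2)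
            (fun _ _ _ => Nat.cast_nonneg _)
      _ = 2 ^ n := by exact_mod_cast Nat.sum_range_choose n
  calc binomGT n k p ≤ ∑ m ∈ Finset.Icc (k + 1) n, (n.choose m : ℝ) * p ^ (k + 1) :=
        Finset.sum_le_sum hterm
    _ = (∑ m ∈ Finset.Icc (k + 1) n, (n.choose m : ℝ)) * p ^ (k + 1) := (Finset.sum_mul ..).symm
    _ ≤ 2 ^ n * p ^ (k + 1) := by gcongr

lemma pow_div_two_pow_le_binomPMF {n k : ℕ} (hk : k ≤ n) {p : ℝ} (hp0 : 0 ≤ p)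
    (hp : p ≤ 1 / 2) : p ^ k / 2 ^ n ≤ binomPMF n k p := by
  have hchoose : (1 : ℝ) ≤ n.choose k := by exact_mod_cast Nat.choose_pos hk
  have hcompl : (1 / 2 : ℝ) ^ n ≤ (1 - p) ^ (n - k) :=
    calc (1 / 2 : ℝ) ^ n ≤ (1 / 2) ^ (n - k) :=
          pow_le_pow_of_le_one (by norm_num) (by norm_num) (Nat.sub_le n k)
      _ ≤ (1 - p) ^ (n - k) := pow_le_pow_left₀ (by norm_num) (by linarith) _
  calc p ^ k / 2 ^ n = 1 * p ^ k * (1 / 2) ^ n := by rw [div_pow, one_pow]; ring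
    _ ≤ binomPMF n k p := by unfold binomPMF; gcongr

lemma eventually_binomGT_lt_mul_binomPMF {n k : ℕ} (hk : k ≤ n) {s : ℝ} (hs : 0 < s) :
    ∀ᶠ p in 𝓝[>] 0, binomGT n k p < s * binomPMF n k p := by
  have hthreshold : (0 : ℝ) < min (1 / 2) (s / 4 ^ n) := lt_min (by norm_num) (by positivity)
  filter_upwards [Ioo_mem_nhdsGT hthreshold] with p ⟨hp0, hp⟩
  have hhalf : p ≤ 1 / 2 := (lt_min_iff.1 hp).1.le
  have hsmall : 2 ^ n * 2 ^ n * p < s := by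
    have := (lt_div_iff₀ (by positivity)).1 (lt_min_iff.1 hp).2
    rwa [show (4 : ℝ) ^ n = 2 ^ n * 2 ^ n by rw [← mul_pow]; norm_num, mul_comm] at this
  have hpk : 0 < p ^ k := pow_pos hp0 k
  calc binomGT n k p ≤ 2 ^ n * p ^ (k + 1) := binomGT_le_two_pow_mul_pow n k hp0.le (by linarith)
    _ = (2 ^ n * 2 ^ n * p) * (p ^ k / 2 ^ n) := by field_simp; ring
    _ < s * (p ^ k / 2 ^ n) := by gcongr
    _ ≤ s * binomPMF n k p := by gcongr; exact pow_div_two_pow_le_binomPMF hk hp0.le hhalf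

theorem struck_below_sar_for_small_thresholds_general
    (F : ℝ → ℝ)
    (hFpos : ∀ c : ℝ, 0 < c → 0 < F c)
    (hFlim : Tendsto F (nhdsWithin 0 (Set.Ioi 0)) (nhds 0))
    (n x : ℕ) (hx2 : x ≤ n - 1)
    (t : ℝ) (ht : 0 < t)
    (σ : ℝ → ℝ)
    (hσpos : ∀ c ∈ Set.Ioo (0 : ℝ) t, 0 < σ c ∧ σ c ≤ 1)
    (hσanti : AntitoneOn σ (Set.Ioo (0 : ℝ) t))
    (T_STR T_SAR : ℝ → ℝ)
    (hSTR : ∀ c ∈ Set.Ioo (0 : ℝ) t, T_STR c ≤ binomGT n x (F c))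
    (hSAR : ∀ c ∈ Set.Ioo (0 : ℝ) t, σ c * binomPMF n x (F c) ≤ T_SAR c) :
    ∃ cbar ∈ Set.Ioo (0 : ℝ) t, ∀ c ∈ Set.Ioo (0 : ℝ) cbar, T_STR c < T_SAR c := by
  have hmid : t / 2 ∈ Ioo 0 t := ⟨half_pos ht, half_lt_self ht⟩
  have hF : Tendsto F (𝓝[>] 0) (𝓝[>] 0) :=
    tendsto_nhdsWithin_iff.2 ⟨hFlim, eventually_nhdsWithin_of_forall hFpos⟩
  have hsmall : ∀ᶠ c in 𝓝[>] 0, F c ∈ Ioo 0 1 ∧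
      binomGT n x (F c) < σ (t / 2) * binomPMF n x (F c) :=
    (hF.eventually (Ioo_mem_nhdsGT one_pos)).and
      (hF.eventually (eventually_binomGT_lt_mul_binomPMF (by omega) (hσpos _ hmid).1))
  obtain ⟨cbar, ⟨hcbar0, hcbar⟩, hsub⟩ :=
    (mem_nhdsGT_iff_exists_mem_Ioc_Ioo_subset hmid.1).1 hsmall
  refine ⟨cbar, ⟨hcbar0, hcbar.trans_lt hmid.2⟩, fun c hc => ?_⟩
  obtain ⟨⟨hF0, hF1⟩, hlt⟩ := hsub hc
  have hct : c ∈ Ioo 0 t := ⟨hc.1, by linarith [hc.2]⟩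
  calc T_STR c ≤ binomGT n x (F c) := hSTR c hct
    _ < σ (t / 2) * binomPMF n x (F c) := hlt
    _ ≤ σ c * binomPMF n x (F c) :=
        mul_le_mul_of_nonneg_right (hσanti hct hmid (by linarith [hc.2]))
          (binomPMF_nonneg n x hF0.le hF1.le)
    _ ≤ T_SAR c := hSAR c hct

theorem struck_below_sar_for_small_thresholds
    (F : ℝ → ℝ) (hFcont : Continuous F) (hFmono : Monotone F)
    (hF01 : ∀ c, 0 ≤ F c ∧ F c ≤ 1)
    (hFpos : ∀ c : ℝ, 0 < c → 0 < F c)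
    (hFlim : Tendsto F (nhdsWithin 0 (Set.Ioi 0)) (nhds 0))
    (n x : ℕ) (hn : 2 ≤ n) (hx1 : 1 ≤ x) (hx2 : x ≤ n - 1)
    (t : ℝ) (ht : 0 < t)
    (σ : ℝ → ℝ)
    (hσpos : ∀ c ∈ Set.Ioo (0 : ℝ) t, 0 < σ c ∧ σ c ≤ 1)
    (hσanti : AntitoneOn σ (Set.Ioo (0 : ℝ) t))
    (T_STR T_SAR : ℝ → ℝ)
    (hSTR : ∀ c ∈ Set.Ioo (0 : ℝ) t, T_STR c ≤ binomGT n x (F c))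
    (hSAR : ∀ c ∈ Set.Ioo (0 : ℝ) t, σ c * binomPMF n x (F c) ≤ T_SAR c) :
    ∃ cbar ∈ Set.Ioo (0 : ℝ) t, ∀ c ∈ Set.Ioo (0 : ℝ) cbar, T_STR c < T_SAR c :=
  struck_below_sar_for_small_thresholds_general F hFpos hFlim n x hx2 t ht σ hσpos hσanti T_STR
    T_SAR hSTR hSAR
end

section
/- Let F be a continuous cdf on [0,1] with F(c) > 0 for c > 0 and F(c) → 0 as c → 0⁺. Fix n ≥ 2 and 1 ≤ x ≤ n−1, and let α > 0 be a constant. If T_STR(c) ≤ P[Bi(n, F(c)) > x] and T_RAN(c) ≥ α·P[Bi(n, F(c)) = x] for all c > 0, then the ratio T_STR(c)/T_RAN(c) tends to 0 as c → 0⁺. -/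
open Filter Set

lemma binomPMF_pos {n k : ℕ} {p : ℝ} (hk : k ≤ n) (h0 : 0 < p) (h1 : p < 1) :
    0 < binomPMF n k p := by
  unfold binomPMF
  have hc : (0:ℝ) < n.choose k := by exact_mod_cast Nat.choose_pos hk
  have h1p : (0:ℝ) < 1 - p := by linarith
  exact mul_pos (mul_pos hc (pow_pos h0 k)) (pow_pos h1p (n - k))

lemma binomPMF_lb {n k : ℕ} {p : ℝ} (h0 : 0 ≤ p) (h1 : p ≤ 1/2) :
    (n.choose k : ℝ) * p ^ k * (1/2) ^ n ≤ binomPMF n k p := by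
  unfold binomPMF
  have hc : (0:ℝ) ≤ (n.choose k : ℝ) * p ^ k := by positivity
  have h2 : ((1:ℝ)/2) ^ n ≤ (1/2) ^ (n - k) :=
    pow_le_pow_of_le_one (by norm_num) (by norm_num) (Nat.sub_le n k)
  have h3 : ((1:ℝ)/2) ^ (n - k) ≤ (1 - p) ^ (n - k) :=
    pow_le_pow_left₀ (by norm_num) (by linarith) _
  exact mul_le_mul_of_nonneg_left (h2.trans h3) hc

lemma binomGT_ub {n k : ℕ} {p : ℝ} (h0 : 0 ≤ p) (h1 : p ≤ 1) :
    binomGT n k p ≤ 2 ^ n * p ^ (k + 1) := by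
  unfold binomGT
  have hterm : ∀ m ∈ Finset.Icc (k + 1) n,
      binomPMF n m p ≤ (n.choose m : ℝ) * p ^ (k + 1) := by
    intro m hm
    simp only [Finset.mem_Icc] at hm
    unfold binomPMF
    have hp : p ^ m ≤ p ^ (k + 1) := pow_le_pow_of_le_one h0 h1 hm.1
    have hq : (1 - p) ^ (n - m) ≤ 1 := pow_le_one₀ (by linarith) (by linarith)
    calc (n.choose m : ℝ) * p ^ m * (1 - p) ^ (n - m)
        ≤ (n.choose m : ℝ) * p ^ m * 1 := by
          apply mul_le_mul_of_nonneg_left hq; positivity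
      _ ≤ (n.choose m : ℝ) * p ^ (k + 1) := by
          rw [mul_one]; exact mul_le_mul_of_nonneg_left hp (by positivity)
  calc (∑ m ∈ Finset.Icc (k + 1) n, binomPMF n m p)
      ≤ ∑ m ∈ Finset.Icc (k + 1) n, (n.choose m : ℝ) * p ^ (k + 1) :=
        Finset.sum_le_sum hterm
    _ = (∑ m ∈ Finset.Icc (k + 1) n, (n.choose m : ℝ)) * p ^ (k + 1) := by
        rw [Finset.sum_mul]
    _ ≤ 2 ^ n * p ^ (k + 1) := by
        apply mul_le_mul_of_nonneg_right _ (by positivity)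
        have : ∑ m ∈ Finset.Icc (k + 1) n, (n.choose m : ℝ)
            ≤ ∑ m ∈ Finset.range (n + 1), (n.choose m : ℝ) := by
          apply Finset.sum_le_sum_of_subset_of_nonneg
          · intro m hm
            simp only [Finset.mem_Icc] at hm
            simp only [Finset.mem_range]
            omega
          · intro m _ _; positivity
        refine this.trans ?_
        have := Nat.sum_range_choose n
        have : (∑ m ∈ Finset.range (n + 1), (n.choose m : ℝ)) = (2:ℝ) ^ n := by
          exact_mod_cast congrArg (Nat.cast : ℕ → ℝ) this
        rw [this]

theorem struck_random_ratio_tendsto_zero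
    (F : ℝ → ℝ) (hFcont : Continuous F) (hFmono : Monotone F)
    (hF01 : ∀ c, 0 ≤ F c ∧ F c ≤ 1)
    (hFpos : ∀ c : ℝ, 0 < c → 0 < F c)
    (hFlim : Tendsto F (nhdsWithin 0 (Set.Ioi 0)) (nhds 0))
    (n x : ℕ) (hn : 2 ≤ n) (hx1 : 1 ≤ x) (hx2 : x ≤ n - 1)
    (α : ℝ) (hα : 0 < α)
    (T_STR T_RAN : ℝ → ℝ)
    (hSTRnn : ∀ c : ℝ, 0 < c → 0 ≤ T_STR c)
    (hSTR : ∀ c : ℝ, 0 < c → T_STR c ≤ binomGT n x (F c))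
    (hRAN : ∀ c : ℝ, 0 < c → α * binomPMF n x (F c) ≤ T_RAN c) :
    Tendsto (fun c => T_STR c / T_RAN c) (nhdsWithin 0 (Set.Ioi 0)) (nhds 0) := by
  have hxn : x ≤ n := by omega
  have hC : (0:ℝ) < (n.choose x : ℝ) := by exact_mod_cast Nat.choose_pos hxn
  set K : ℝ := 4 ^ n / ((n.choose x : ℝ) * α) with hK
  have hKpos : 0 < K := by positivity
  -- eventually F c < 1/2
  have hev : ∀ᶠ c in nhdsWithin 0 (Set.Ioi 0), F c < 1/2 := by
    have : Set.Iio (1/2 : ℝ) ∈ nhds (0:ℝ) := Iio_mem_nhds (by norm_num)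
    exact hFlim this
  have hevpos : ∀ᶠ c in nhdsWithin (0:ℝ) (Set.Ioi 0), 0 < c :=
    eventually_mem_nhdsWithin
  -- upper bound eventually
  have hub : ∀ᶠ c in nhdsWithin 0 (Set.Ioi 0), T_STR c / T_RAN c ≤ K * F c := by
    filter_upwards [hev, hevpos] with c hc2 hc0
    have hp0 : 0 < F c := hFpos c hc0
    have hp1 : F c < 1 := lt_of_lt_of_le hc2 (by norm_num)
    have hpmf : 0 < binomPMF n x (F c) := binomPMF_pos hxn hp0 hp1
    have hTR : 0 < T_RAN c := lt_of_lt_of_le (by positivity) (hRAN c hc0)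
    rw [div_le_iff₀ hTR]
    have step1 : T_STR c ≤ 2 ^ n * F c ^ (x + 1) :=
      (hSTR c hc0).trans (binomGT_ub hp0.le hp1.le)
    have step2 : (n.choose x : ℝ) * F c ^ x * (1/2) ^ n ≤ binomPMF n x (F c) :=
      binomPMF_lb hp0.le hc2.le
    have key : (2:ℝ) ^ n * F c ^ (x + 1)
        = K * F c * (α * ((n.choose x : ℝ) * F c ^ x * (1/2) ^ n)) := by
      rw [hK, pow_succ]
      have h4 : (4:ℝ) ^ n = 2 ^ n * 2 ^ n := by
        rw [← mul_pow]; norm_num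
      field_simp
      rw [h4]
      ring_nf
      rw [show (2:ℝ) ^ (n * 2) = 2 ^ n * 2 ^ n by ring, ← mul_assoc, ← mul_pow]
      norm_num
    calc T_STR c ≤ 2 ^ n * F c ^ (x + 1) := step1
      _ = K * F c * (α * ((n.choose x : ℝ) * F c ^ x * (1/2) ^ n)) := key
      _ ≤ K * F c * (α * binomPMF n x (F c)) := by
          apply mul_le_mul_of_nonneg_left _ (by positivity)
          exact mul_le_mul_of_nonneg_left step2 hα.le
      _ ≤ K * F c * T_RAN c := by
          apply mul_le_mul_of_nonneg_left (hRAN c hc0) (by positivity)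
  have hlb : ∀ᶠ c in nhdsWithin 0 (Set.Ioi 0), 0 ≤ T_STR c / T_RAN c := by
    filter_upwards [hev, hevpos] with c hc2 hc0
    have hp0 : 0 < F c := hFpos c hc0
    have hp1 : F c < 1 := lt_of_lt_of_le hc2 (by norm_num)
    have hpmf : 0 < binomPMF n x (F c) := binomPMF_pos hxn hp0 hp1
    have hTR : 0 < T_RAN c := lt_of_lt_of_le (by positivity) (hRAN c hc0)
    exact div_nonneg (hSTRnn c hc0) hTR.le
  have hg : Tendsto (fun c => K * F c) (nhdsWithin 0 (Set.Ioi 0)) (nhds 0) := by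
    have := hFlim.const_mul K
    simpa using this
  exact squeeze_zero' hlb hub hg
end
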